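/- Let {x_k}, {B_k}, {d_k} be the sequences generated by the Simplex Frank-Wolfe algorithm over the unit simplex S_n with an L-smooth, μ-strongly convex objective f and step size δ_k = μ/(2Ln²). Then for all k ≥ 0, f(x_k) − f* ≤ f(x_k) − B_k ≤ (μ d₀²/2)·exp(−μ k/(4Ln²)), where f* is the optimal value and d₀ = √(2(f(x₀) − B₀)/μ) with B₀ ≤ f* an initial lower bound. -/

import Mathlib

/-! Strong convexity and first-order optimality give `μ/2 ‖x_k - x*‖² ≤ f(x_k) - B_k = μ d_k²/2`,
so the minimizer `x*` lies in the simplex ball `S(x_k, d_k)`: this ball contains every point of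
the simplex within Euclidean distance `d_k` of `x_k`. Hence the working lower bound, the linear
model minimized over that ball, never exceeds `f*`, and `B_k ≤ f*` stays true. On the other hand
the ball has Euclidean radius at most `n d_k`, so for `δ = μ/(2Ln²)` the smoothness penalty of the
step is at most `Lδ²n²d_k²/2 = (δ/2)(f(x_k) - B_k)`, and the gap `f(x_k) - B_k` contracts by the
factor `1 - δ/2 ≤ exp(-δ/2)`. -/

open InnerProductSpace Finset

noncomputable section

abbrev Euc (n : ℕ) := EuclideanSpace ℝ (Fin n)

/-- The all-ones vector. -/
def ones (n : ℕ) : Euc n := WithLp.toLp 2 (fun _ => (1 : ℝ))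

/-- The unit simplex. -/
def unitSimplex (n : ℕ) : Set (Euc n) := {x | (∀ i, 0 ≤ x i) ∧ ∑ i, x i = 1}

/-- The simplex ball. -/
def simplexBall (n : ℕ) (x : Euc n) (d : ℝ) : Set (Euc n) :=
  {y | ∃ l ∈ unitSimplex n, y = (x - d • ones n) + ((n : ℝ) * d) • l}

theorem convex_unitSimplex (n : ℕ) : Convex ℝ (unitSimplex n) :=
  (convex_stdSimplex ℝ (Fin n)).linear_preimage (WithLp.linearEquiv 2 ℝ (Fin n → ℝ)).toLinearMap

theorem IsMinOn.inner_gradient_nonneg {E : Type*} [NormedAddCommGroup E] [InnerProductSpace ℝ E]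
    [CompleteSpace E] {f : E → ℝ} {s : Set E} {g a z : E} (hmin : IsMinOn f s a)
    (hs : Convex ℝ s) (hf : HasGradientAt f g a) (ha : a ∈ s) (hz : z ∈ s) :
    0 ≤ ⟪g, z - a⟫_ℝ := by
  have hcone : z - a ∈ posTangentConeAt s a :=
    sub_mem_posTangentConeAt_of_segment_subset (hs.segment_subset ha hz)
  simpa using hmin.localize.hasFDerivWithinAt_nonneg hf.hasFDerivAt.hasFDerivWithinAt hcone

theorem mem_simplexBall_of_norm_sub_le {n : ℕ} {x z : Euc n} {d : ℝ}
    (hx : x ∈ unitSimplex n) (hz : z ∈ unitSimplex n) (hzx : ‖z - x‖ ≤ d) :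
    z ∈ simplexBall n x d := by
  have hcoord (i : Fin n) : x i - d ≤ z i := by
    have : |z i - x i| ≤ ‖z - x‖ := by simpa using PiLp.norm_apply_le (z - x) i
    linarith [neg_abs_le (z i - x i)]
  rcases (norm_nonneg _ |>.trans hzx).eq_or_lt with rfl | hd
  · refine ⟨z, hz, ?_⟩
    rw [norm_le_zero_iff, sub_eq_zero] at hzx
    simp [hzx]
  · have hn : (n : ℝ) ≠ 0 := Nat.cast_ne_zero.2 (by rintro rfl; simpa using hx.2)
    refine ⟨WithLp.toLp 2 fun i => (z i - x i + d) / (n * d), ⟨fun i => ?_, ?_⟩, ?_⟩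
    · have := hcoord i
      exact div_nonneg (by linarith) (by positivity)
    · simp only [← Finset.sum_div, Finset.sum_add_distrib, Finset.sum_sub_distrib,
        hz.2, hx.2, Finset.sum_const, Finset.card_univ, Fintype.card_fin, nsmul_eq_mul]
      field_simp
      ring
    · ext i
      simp only [PiLp.add_apply, PiLp.sub_apply, PiLp.smul_apply, smul_eq_mul, ones]
      field_simp
      ring

theorem sq_norm_le_one_of_mem_unitSimplex {n : ℕ} {l : Euc n} (hl : l ∈ unitSimplex n) :
    ‖l‖ ^ 2 ≤ 1 := by
  have hle (i : Fin n) : l i ≤ 1 :=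
    hl.2 ▸ Finset.single_le_sum (fun j _ => hl.1 j) (Finset.mem_univ i)
  calc ‖l‖ ^ 2 = ∑ i, l i ^ 2 := by simp [EuclideanSpace.norm_sq_eq]
    _ ≤ ∑ i, l i := Finset.sum_le_sum fun i _ => by nlinarith [hl.1 i, hle i]
    _ = 1 := hl.2

theorem sq_norm_sub_le_of_mem_simplexBall {n : ℕ} {x y : Euc n} {d : ℝ}
    (hy : y ∈ simplexBall n x d) : ‖x - y‖ ^ 2 ≤ (n : ℝ) ^ 2 * d ^ 2 := by
  obtain ⟨l, hl, rfl⟩ := hy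
  have hones : ‖d • ones n‖ ^ 2 = n * d ^ 2 := by
    simp [norm_smul, mul_pow, EuclideanSpace.norm_sq_eq, ones, mul_comm]
  have hinner : ⟪d • ones n, ((n : ℝ) * d) • l⟫_ℝ = n * d ^ 2 := by
    rw [real_inner_smul_left, real_inner_smul_right]
    simp [PiLp.inner_apply, ones, hl.2]
    ring
  have hl' : ‖((n : ℝ) * d) • l‖ ^ 2 ≤ (n : ℝ) ^ 2 * d ^ 2 := by
    rw [norm_smul, mul_pow, Real.norm_eq_abs, sq_abs]
    nlinarith [sq_norm_le_one_of_mem_unitSimplex hl, sq_nonneg ((n : ℝ) * d)]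
  have hsub : x - (x - d • ones n + ((n : ℝ) * d) • l) = d • ones n - ((n : ℝ) * d) • l := by abel
  rw [hsub, norm_sub_sq_real, hones, hinner]
  nlinarith [sq_nonneg d, (Nat.cast_nonneg n : (0 : ℝ) ≤ n)]

section InnerProductSpace

variable {E : Type*} [NormedAddCommGroup E] [InnerProductSpace ℝ E] {f : E → ℝ} {g a b : E}

theorem le_of_strongConvex_le_smooth {μ L : ℝ} (hab : a ≠ b)
    (hsmooth : f b ≤ f a + ⟪g, b - a⟫_ℝ + L / 2 * ‖a - b‖ ^ 2)
    (hstrong : f a + ⟪g, b - a⟫_ℝ + μ / 2 * ‖a - b‖ ^ 2 ≤ f b) : μ ≤ L := by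
  have : 0 < ‖a - b‖ ^ 2 := pow_pos (norm_pos_iff.2 (sub_ne_zero.2 hab)) 2
  nlinarith

theorem frankWolfe_gap_le {δ L B B' : ℝ} (hδ0 : 0 ≤ δ) (hδ1 : δ ≤ 1)
    (hsmooth : f ((1 - δ) • a + δ • b) ≤
      f a + ⟪g, (1 - δ) • a + δ • b - a⟫_ℝ + L / 2 * ‖a - ((1 - δ) • a + δ • b)‖ ^ 2)
    (hstep : L * δ * ‖a - b‖ ^ 2 ≤ f a - B) (hB : B ≤ B') (hBw : f a + ⟪g, b - a⟫_ℝ ≤ B') :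
    f ((1 - δ) • a + δ • b) - B' ≤ (1 - δ / 2) * (f a - B) := by
  have hdir : (1 - δ) • a + δ • b - a = δ • (b - a) := by module
  have hinner : ⟪g, (1 - δ) • a + δ • b - a⟫_ℝ = δ * ⟪g, b - a⟫_ℝ := by
    rw [hdir, real_inner_smul_right]
  have hnorm : ‖a - ((1 - δ) • a + δ • b)‖ ^ 2 = δ ^ 2 * ‖a - b‖ ^ 2 := by
    rw [← norm_neg, neg_sub, hdir, norm_smul, mul_pow, Real.norm_eq_abs, sq_abs, norm_sub_rev]
  rw [hinner, hnorm] at hsmooth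
  linarith [mul_le_mul_of_nonneg_left hBw hδ0, mul_le_mul_of_nonneg_left hB (sub_nonneg.2 hδ1),
    mul_le_mul_of_nonneg_left hstep hδ0]

end InnerProductSpace

section SimplexFrankWolfe

variable {n : ℕ} {L μ : ℝ} {f : Euc n → ℝ} {g : Euc n → Euc n} {xstar x y : Euc n} {B : ℝ}

theorem sfw_workingLowerBound_le (hμ : 0 < μ)
    (hstrong : ∀ a ∈ unitSimplex n, ∀ b ∈ unitSimplex n,
      f a + ⟪g a, b - a⟫_ℝ + μ / 2 * ‖a - b‖ ^ 2 ≤ f b)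
    (hxs : xstar ∈ unitSimplex n) (hopt : ∀ z ∈ unitSimplex n, 0 ≤ ⟪g xstar, z - xstar⟫_ℝ)
    (hx : x ∈ unitSimplex n) (hB : B ≤ f xstar)
    (hy : ∀ z ∈ simplexBall n x √(2 * (f x - B) / μ) ∩ unitSimplex n,
      ⟪g x, y⟫_ℝ ≤ ⟪g x, z⟫_ℝ) :
    f x + ⟪g x, y - x⟫_ℝ ≤ f xstar := by
  have hdist : ‖xstar - x‖ ≤ √(2 * (f x - B) / μ) := by
    refine Real.le_sqrt_of_sq_le ((le_div_iff₀ hμ).2 ?_)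
    linarith [hstrong xstar hxs x hx, hopt x hx]
  have hxs_min := hy xstar ⟨mem_simplexBall_of_norm_sub_le hx hxs hdist, hxs⟩
  have hxs_lower := hstrong x hx xstar hxs
  rw [inner_sub_right] at hxs_lower ⊢
  nlinarith [norm_nonneg (x - xstar)]

theorem sfw_step_gap_contraction (hn : 0 < n) (hL : 0 < L) (hμ : 0 < μ) {δ : ℝ}
    (hδ : δ = μ / (2 * L * (n : ℝ) ^ 2))
    (hsmooth : ∀ a ∈ unitSimplex n, ∀ b ∈ unitSimplex n,
      f b ≤ f a + ⟪g a, b - a⟫_ℝ + L / 2 * ‖a - b‖ ^ 2)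
    (hstrong : ∀ a ∈ unitSimplex n, ∀ b ∈ unitSimplex n,
      f a + ⟪g a, b - a⟫_ℝ + μ / 2 * ‖a - b‖ ^ 2 ≤ f b)
    (hx : x ∈ unitSimplex n) (hBx : B ≤ f x)
    (hy : y ∈ simplexBall n x √(2 * (f x - B) / μ) ∩ unitSimplex n) :
    (1 - δ) • x + δ • y ∈ unitSimplex n ∧
      f ((1 - δ) • x + δ • y) - max B (f x + ⟪g x, y - x⟫_ℝ) ≤
        Real.exp (-(δ / 2)) * (f x - B) := by
  by_cases hxy : x = y
  -- nothing bounds `δ` here (think of `n = 1`), but the new gap is `≤ 0`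
  · subst hxy
    refine ⟨by simpa [← add_smul] using hx, ?_⟩
    simp only [← add_smul, sub_add_cancel, one_smul, sub_self, inner_zero_right, add_zero]
    nlinarith [le_max_right B (f x), Real.exp_pos (-(δ / 2))]
  have hμL : μ ≤ L := le_of_strongConvex_le_smooth hxy (hsmooth x hx y hy.2) (hstrong x hx y hy.2)
  have hn2 : (1 : ℝ) ≤ (n : ℝ) ^ 2 := one_le_pow₀ (by exact_mod_cast hn)
  have hδ0 : 0 ≤ δ := hδ ▸ by positivity
  have hδ1 : δ ≤ 1 := hδ ▸ (div_le_one (by positivity)).2 (by nlinarith)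
  have hx' : (1 - δ) • x + δ • y ∈ unitSimplex n :=
    convex_unitSimplex n hx hy.2 (sub_nonneg.2 hδ1) hδ0 (by ring)
  have hstep : L * δ * ‖x - y‖ ^ 2 ≤ f x - B := by
    have hball := sq_norm_sub_le_of_mem_simplexBall hy.1
    rw [Real.sq_sqrt (by have := hμ.le; positivity)] at hball
    calc L * δ * ‖x - y‖ ^ 2 ≤ L * δ * ((n : ℝ) ^ 2 * (2 * (f x - B) / μ)) := by gcongr
      _ = f x - B := by rw [hδ]; field_simp
  refine ⟨hx', (frankWolfe_gap_le hδ0 hδ1 (hsmooth x hx _ hx') hstep (le_max_left _ _)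
    (le_max_right _ _)).trans ?_⟩
  gcongr
  exact Real.one_sub_le_exp_neg _

end SimplexFrankWolfe

theorem sfw_linear_convergence (n : ℕ) (hn : 0 < n) (L μ : ℝ) (hL : 0 < L) (hμ : 0 < μ)
    (f : Euc n → ℝ) (g : Euc n → Euc n)
    (hgrad : ∀ a ∈ unitSimplex n, HasGradientAt f (g a) a)
    (hsmooth : ∀ a ∈ unitSimplex n, ∀ b ∈ unitSimplex n,
      f b ≤ f a + ⟪g a, b - a⟫_ℝ + L / 2 * ‖a - b‖ ^ 2)
    (hstrong : ∀ a ∈ unitSimplex n, ∀ b ∈ unitSimplex n,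
      f a + ⟪g a, b - a⟫_ℝ + μ / 2 * ‖a - b‖ ^ 2 ≤ f b)
    (xstar : Euc n) (hxs : xstar ∈ unitSimplex n) (hmin : ∀ z ∈ unitSimplex n, f xstar ≤ f z)
    (x y : ℕ → Euc n) (B d : ℕ → ℝ)
    (hx0 : x 0 ∈ unitSimplex n) (hB0 : B 0 ≤ f xstar)
    (hd0 : d 0 = Real.sqrt (2 * (f (x 0) - B 0) / μ))
    (hy : ∀ k : ℕ, y (k + 1) ∈ simplexBall n (x k) (d k) ∩ unitSimplex n ∧
      ∀ z ∈ simplexBall n (x k) (d k) ∩ unitSimplex n,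
        ⟪g (x k), y (k + 1)⟫_ℝ ≤ ⟪g (x k), z⟫_ℝ)
    (hB : ∀ k : ℕ, B (k + 1) = max (B k) (f (x k) + ⟪g (x k), y (k + 1) - x k⟫_ℝ))
    (hxup : ∀ k : ℕ, x (k + 1) =
      (1 - μ / (2 * L * (n : ℝ) ^ 2)) • x k + (μ / (2 * L * (n : ℝ) ^ 2)) • y (k + 1))
    (hd : ∀ k : ℕ, d (k + 1) = Real.sqrt (2 * (f (x (k + 1)) - B (k + 1)) / μ)) :
    ∀ k : ℕ, f (x k) - f xstar ≤ f (x k) - B k ∧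
      f (x k) - B k ≤ μ * (d 0) ^ 2 / 2 * Real.exp (-(μ * k) / (4 * L * (n : ℝ) ^ 2)) := by
  set δ := μ / (2 * L * (n : ℝ) ^ 2) with hδ
  have hopt (z : Euc n) (hz : z ∈ unitSimplex n) : 0 ≤ ⟪g xstar, z - xstar⟫_ℝ :=
    (isMinOn_iff.2 hmin).inner_gradient_nonneg (convex_unitSimplex n) (hgrad xstar hxs) hxs hz
  have hdk (k : ℕ) : d k = √(2 * (f (x k) - B k) / μ) := k.casesOn hd0 hd
  have hinv (k : ℕ) : x k ∈ unitSimplex n ∧ B k ≤ f xstar ∧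
      f (x k) - B k ≤ Real.exp (-(δ / 2)) ^ k * (f (x 0) - B 0) := by
    induction k with
    | zero => simpa using ⟨hx0, hB0⟩
    | succ k ih =>
      obtain ⟨hxk, hBk, hgapk⟩ := ih
      obtain ⟨hball, hymin⟩ := hdk k ▸ hy k
      obtain ⟨hx', hgap'⟩ :=
        sfw_step_gap_contraction hn hL hμ hδ hsmooth hstrong hxk (hBk.trans (hmin _ hxk)) hball
      refine ⟨hxup k ▸ hx',
        hB k ▸ max_le hBk (sfw_workingLowerBound_le hμ hstrong hxs hopt hxk hBk hymin), ?_⟩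
      rw [hxup k, hB k, pow_succ', mul_assoc]
      exact hgap'.trans (by gcongr)
  intro k
  obtain ⟨-, hBk, hgapk⟩ := hinv k
  refine ⟨by linarith, hgapk.trans_eq ?_⟩
  have hrate : (k : ℝ) * -(δ / 2) = -(μ * k) / (4 * L * (n : ℝ) ^ 2) := by
    rw [hδ]; field_simp; ring
  rw [← Real.exp_nat_mul, hrate, hd0, Real.sq_sqrt (div_nonneg (by linarith [hmin _ hx0]) hμ.le)]
  field_simp
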